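/- For the binary WOM with t writes, the point (R_1,...,R_t) with R_l = α_{l−1}·h(ε_l) for l < t and R_t = α_{t−1}, where α_l = ∏_{j=1}^{l}(1−ε_j), satisfies ∑_{l=1}^t R_l ≤ log₂(t+1); moreover this bound is attained with the choice ε_l = 1/(t − l + 2). -/

import Mathlib

/-!
Peeling off the first write gives the recursion `S(ε₀, ε₁, …) = h(ε₀) + (1 - ε₀) · S(ε₁, …)` for
the sum-rate `S`. By concavity of `log` (Jensen at the points `1/x` and `k/(1-x)` with weights `x`
and `1 - x`), `h(x) + (1 - x) log₂ k ≤ log₂ (k + 1)`, with equality at `x = 1/(k + 1)`, so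
induction on the number of writes gives `S ≤ log₂ (t + 1)`, with equality for
`ε_l = 1/(t - l + 1)` (indexing from `0`).
-/

open Finset Real

lemma binEntropy_add_mul_log_le {x k : ℝ} (hx : x ∈ Set.Icc 0 1) (hk : 0 < k) :
    binEntropy x + (1 - x) * log k ≤ log (k + 1) := by
  obtain ⟨hx0, hx1⟩ := hx
  rcases hx0.eq_or_lt with rfl | hx0
  · simpa using log_le_log hk (by linarith)
  rcases hx1.eq_or_lt with rfl | hx1
  · simpa using log_nonneg (by linarith)
  have hx1' : 0 < 1 - x := by linarith
  have jensen := strictConcaveOn_log_Ioi.concaveOn.2 (Set.mem_Ioi.2 (inv_pos.2 hx0))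
    (Set.mem_Ioi.2 (div_pos hk hx1')) hx0.le hx1'.le (add_sub_cancel x 1)
  have hmean : x • x⁻¹ + (1 - x) • (k / (1 - x)) = k + 1 := by
    simp only [smul_eq_mul]
    field_simp
    ring
  rw [hmean, smul_eq_mul, smul_eq_mul, div_eq_mul_inv, log_mul hk.ne' (inv_ne_zero hx1'.ne')]
    at jensen
  rw [binEntropy]
  linarith

lemma binEntropy_inv_add_one_add_mul_log {k : ℝ} (hk : 0 < k) :
    binEntropy (k + 1)⁻¹ + (1 - (k + 1)⁻¹) * log k = log (k + 1) := by
  have hk1 : 0 < k + 1 := by linarith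
  have hcompl : 1 - (k + 1)⁻¹ = k * (k + 1)⁻¹ := by field_simp; ring
  rw [binEntropy, hcompl, inv_inv, mul_inv, inv_inv, log_mul (inv_ne_zero hk.ne') hk1.ne',
    log_inv]
  linear_combination log (k + 1) * mul_inv_cancel₀ hk1.ne'

lemma binEntropy_div_log_two (x : ℝ) :
    binEntropy x / log 2 = -(x * logb 2 x) - (1 - x) * logb 2 (1 - x) := by
  simp only [binEntropy, log_inv, logb]
  ring

/-- The sum-rate of the rate point of an `(n + 1)`-write WOM, indexed from `0`; `binEntropy` is in
nats, hence the division by `log 2`. -/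
noncomputable def womSumRate (ε : ℕ → ℝ) (n : ℕ) : ℝ :=
  (∑ l ∈ range n, (∏ j ∈ range l, (1 - ε j)) * (binEntropy (ε l) / log 2))
    + ∏ j ∈ range n, (1 - ε j)

lemma womSumRate_zero (ε : ℕ → ℝ) : womSumRate ε 0 = 1 := by
  simp [womSumRate]

lemma womSumRate_succ (ε : ℕ → ℝ) (n : ℕ) :
    womSumRate ε (n + 1)
      = binEntropy (ε 0) / log 2 + (1 - ε 0) * womSumRate (fun l ↦ ε (l + 1)) n := by
  have hsum : ∑ l ∈ range n, (∏ j ∈ range (l + 1), (1 - ε j)) * (binEntropy (ε (l + 1)) / log 2)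
      = (1 - ε 0) * ∑ l ∈ range n,
          (∏ j ∈ range l, (1 - ε (j + 1))) * (binEntropy (ε (l + 1)) / log 2) := by
    rw [mul_sum]
    exact sum_congr rfl fun l _ ↦ by rw [prod_range_succ']; ring
  rw [womSumRate, womSumRate, sum_range_succ', prod_range_succ', hsum, prod_range_zero]
  ring

lemma womSumRate_le {ε : ℕ → ℝ} {n : ℕ} (hε : ∀ l < n, ε l ∈ Set.Icc 0 1) :
    womSumRate ε n ≤ logb 2 (n + 2) := by
  induction n generalizing ε with
  | zero => simp [womSumRate_zero]
  | succ n ih =>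
    have hε0 := hε 0 n.succ_pos
    have htail := ih fun l hl ↦ hε (l + 1) (by omega)
    have hstep := binEntropy_add_mul_log_le hε0 (k := n + 2) (by positivity)
    calc womSumRate ε (n + 1)
        ≤ binEntropy (ε 0) / log 2 + (1 - ε 0) * logb 2 (n + 2) := by
          rw [womSumRate_succ]
          gcongr
          linarith [hε0.2]
      _ = (binEntropy (ε 0) + (1 - ε 0) * log (n + 2)) / log 2 := by
          rw [logb]
          ring
      _ ≤ log (n + 2 + 1) / log 2 := by gcongr
      _ = logb 2 ((n + 1 : ℕ) + 2) := by
          rw [logb]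
          push_cast
          ring_nf

lemma womSumRate_eq_logb {ε : ℕ → ℝ} {n : ℕ} (hε : ∀ l < n, ε l = ((n : ℝ) - l + 2)⁻¹) :
    womSumRate ε n = logb 2 (n + 2) := by
  induction n generalizing ε with
  | zero => simp [womSumRate_zero]
  | succ n ih =>
    have hε0 : ε 0 = ((n : ℝ) + 2 + 1)⁻¹ := by
      rw [hε 0 n.succ_pos]
      push_cast
      ring_nf
    have htail := ih (ε := fun l ↦ ε (l + 1)) fun l hl ↦ by
      rw [hε (l + 1) (by omega)]
      push_cast
      ring_nf
    have hopt := binEntropy_inv_add_one_add_mul_log (k := (n : ℝ) + 2) (by positivity)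
    have hcast : ((n + 1 : ℕ) : ℝ) + 2 = n + 2 + 1 := by push_cast; ring
    rw [womSumRate_succ, htail, hε0, logb, logb, hcast, ← hopt]
    ring

theorem stmt_9_general (t : ℕ) (ht : 1 ≤ t) (ε : ℕ → ℝ)
    (hε : ∀ l, l < t → 0 ≤ ε l ∧ ε l ≤ 1 / 2)
    (binH : ℝ → ℝ)
    (hbinH : ∀ x, binH x = -(x * Real.logb 2 x) - (1 - x) * Real.logb 2 (1 - x)) :
    (∑ l ∈ range (t - 1), (∏ j ∈ range l, (1 - ε j)) * binH (ε l))
        + (∏ j ∈ range (t - 1), (1 - ε j)) ≤ Real.logb 2 (t + 1) ∧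
    ((∀ l, l < t → ε l = 1 / ((t : ℝ) - l + 1)) →
      (∑ l ∈ range (t - 1), (∏ j ∈ range l, (1 - ε j)) * binH (ε l))
          + (∏ j ∈ range (t - 1), (1 - ε j)) = Real.logb 2 (t + 1)) := by
  obtain ⟨n, rfl⟩ : ∃ n, t = n + 1 := ⟨t - 1, by omega⟩
  obtain rfl : binH = fun x ↦ binEntropy x / log 2 := funext fun x ↦ by
    rw [hbinH, binEntropy_div_log_two]
  have hlogb : logb 2 ((n + 1 : ℕ) + 1 : ℝ) = logb 2 (n + 2) := by push_cast; ring_nf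
  refine ⟨?_, fun hopt ↦ ?_⟩
  · rw [hlogb]
    exact womSumRate_le fun l hl ↦ ⟨(hε l (by omega)).1, by linarith [(hε l (by omega)).2]⟩
  · rw [hlogb]
    refine womSumRate_eq_logb fun l hl ↦ ?_
    rw [hopt l (by omega), one_div]
    push_cast
    ring_nf

/-- For the binary `t`-write WOM, the rate point `R_l = α_{l−1} h(ε_l)` (`l < t`),
`R_t = α_{t−1}`, where `α_l = ∏_{j=1}^l (1−ε_j)`, satisfies `∑ R_l ≤ log₂(t+1)`,
with equality attained by the choice `ε_l = 1/(t − l + 2)`.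
(Indices are shifted to start at 0: `ε l` below is `ε_{l+1}` of the paper.) -/
theorem stmt_9 (t : ℕ) (ht : 1 ≤ t) (ε : ℕ → ℝ)
    (hε : ∀ l, l < t → 0 ≤ ε l ∧ ε l ≤ 1 / 2) (hlast : ε (t - 1) = 1 / 2)
    (binH : ℝ → ℝ)
    (hbinH : ∀ x, binH x = -(x * Real.logb 2 x) - (1 - x) * Real.logb 2 (1 - x)) :
    (∑ l ∈ range (t - 1), (∏ j ∈ range l, (1 - ε j)) * binH (ε l))
        + (∏ j ∈ range (t - 1), (1 - ε j)) ≤ Real.logb 2 (t + 1) ∧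
    ((∀ l, l < t → ε l = 1 / ((t : ℝ) - l + 1)) →
      (∑ l ∈ range (t - 1), (∏ j ∈ range l, (1 - ε j)) * binH (ε l))
          + (∏ j ∈ range (t - 1), (1 - ε j)) = Real.logb 2 (t + 1)) :=
  stmt_9_general t ht ε hε binH hbinH
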